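/- For every B ∈ (0,1) and every x ∈ (-B,1), the function U satisfies (LU)(x) = -c₁(1-x)/2, where (Lf)(x) = (μ²/2)·(1-x²)²·f''(x). -/

import Mathlib

/-!
Near any `x > -B` the function `U` coincides with the smooth branch `U₁`, so on `(-B, 1)` it
suffices to differentiate `U₁` twice. Since `(log ((1 + x) / (1 - x)))' = 2 / (1 - x²)`, one finds
`U₁'' x = -c₁ / (μ² (1 - x) (1 + x)²)`, and multiplying by `μ² (1 - x²)² / 2` leaves
`-c₁ (1 - x) / 2`.
-/

noncomputable section

/-- The function `U₁(x) = (c₁(1-x)/(4μ²))·(ln((1+x)/(1-x)) + 2/(1-B²))`. -/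
def U₁ (μ c₁ B x : ℝ) : ℝ :=
  c₁ * (1 - x) / (4 * μ ^ 2) * (Real.log ((1 + x) / (1 - x)) + 2 / (1 - B ^ 2))

/-- The function `U` of the switching problem: `U(x) = U₁(x)` for `x ∈ (-B, 1]` and
`U(x) = U₁(-x) + c₂` for `x ∈ (-1, -B]`. -/
def Ufun (μ c₁ c₂ B x : ℝ) : ℝ :=
  if -B < x then U₁ μ c₁ B x else U₁ μ c₁ B (-x) + c₂

open Filter Set Topology

theorem hasDerivAt_log_one_add_div_one_sub {x : ℝ} (hx : x ∈ Ioo (-1 : ℝ) 1) :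
    HasDerivAt (fun y => Real.log ((1 + y) / (1 - y))) (2 / ((1 - x) * (1 + x))) x := by
  obtain ⟨h₁, h₂⟩ := hx
  have hquot : HasDerivAt (fun y : ℝ => (1 + y) / (1 - y))
      ((1 * (1 - x) - (1 + x) * (-1)) / (1 - x) ^ 2) x :=
    ((hasDerivAt_id x).const_add 1).div ((hasDerivAt_id x).const_sub 1) (by simp; linarith)
  convert hquot.log (div_pos (by linarith) (by linarith)).ne' using 1
  field_simp
  ring

section

variable (μ c₁ B : ℝ)

def derivU₁ (x : ℝ) : ℝ :=
  -c₁ / (4 * μ ^ 2) * (Real.log ((1 + x) / (1 - x)) + 2 / (1 - B ^ 2))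
    + c₁ / (2 * μ ^ 2 * (1 + x))

variable {μ c₁ B}

theorem hasDerivAt_U₁ {x : ℝ} (hx : x ∈ Ioo (-1 : ℝ) 1) :
    HasDerivAt (U₁ μ c₁ B) (derivU₁ μ c₁ B x) x := by
  have hfactor : HasDerivAt (fun y : ℝ => c₁ * (1 - y) / (4 * μ ^ 2))
      (c₁ * (-1) / (4 * μ ^ 2)) x :=
    (((hasDerivAt_id x).const_sub 1).const_mul c₁).div_const _
  refine (hfactor.mul ((hasDerivAt_log_one_add_div_one_sub hx).add_const
    (2 / (1 - B ^ 2)))).congr_deriv ?_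
  have : 1 - x ≠ 0 := by linarith [hx.2]
  have : 1 + x ≠ 0 := by linarith [hx.1]
  rcases eq_or_ne μ 0 with rfl | hμ
  · simp [derivU₁]
  · simp only [derivU₁]
    field_simp
    ring

theorem hasDerivAt_derivU₁ (hμ : μ ≠ 0) {x : ℝ} (hx : x ∈ Ioo (-1 : ℝ) 1) :
    HasDerivAt (derivU₁ μ c₁ B) (-c₁ / (μ ^ 2 * (1 - x) * (1 + x) ^ 2)) x := by
  have : 1 - x ≠ 0 := by linarith [hx.2]
  have : 1 + x ≠ 0 := by linarith [hx.1]
  have hrecip : HasDerivAt (fun y : ℝ => c₁ / (2 * μ ^ 2 * (1 + y)))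
      ((0 * (2 * μ ^ 2 * (1 + x)) - c₁ * (2 * μ ^ 2 * 1)) / (2 * μ ^ 2 * (1 + x)) ^ 2) x :=
    (hasDerivAt_const x c₁).div (((hasDerivAt_id x).const_add 1).const_mul (2 * μ ^ 2))
      (by simp [hμ, this])
  refine ((((hasDerivAt_log_one_add_div_one_sub hx).add_const (2 / (1 - B ^ 2))).const_mul
    (-c₁ / (4 * μ ^ 2))).add hrecip).congr_deriv ?_
  field_simp
  ring

theorem deriv_U₁_eventuallyEq {x : ℝ} (hx : x ∈ Ioo (-1 : ℝ) 1) :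
    deriv (U₁ μ c₁ B) =ᶠ[𝓝 x] derivU₁ μ c₁ B :=
  eventually_of_mem (isOpen_Ioo.mem_nhds hx) fun _ hy => (hasDerivAt_U₁ hy).deriv

end

theorem Ufun_eventuallyEq_U₁ {μ c₁ c₂ B x : ℝ} (hx : -B < x) :
    Ufun μ c₁ c₂ B =ᶠ[𝓝 x] U₁ μ c₁ B :=
  eventually_of_mem (Ioi_mem_nhds hx) fun _ hy => if_pos hy

theorem LU_on_continuation (μ c₁ c₂ : ℝ) (hμ : 0 < μ) (B : ℝ) (hB : B ∈ Set.Ioo (0 : ℝ) 1) :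
    ∀ x ∈ Set.Ioo (-B) (1 : ℝ),
      (DifferentiableAt ℝ (Ufun μ c₁ c₂ B) x
        ∧ DifferentiableAt ℝ (deriv (Ufun μ c₁ c₂ B)) x) ∧
      μ ^ 2 / 2 * (1 - x ^ 2) ^ 2 * deriv (deriv (Ufun μ c₁ c₂ B)) x
        = -(c₁ * (1 - x)) / 2 := by
  intro x hx
  have hx₁ : x ∈ Ioo (-1 : ℝ) 1 := ⟨by linarith [hx.1, hB.2], hx.2⟩
  have hU : Ufun μ c₁ c₂ B =ᶠ[𝓝 x] U₁ μ c₁ B := Ufun_eventuallyEq_U₁ hx.1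
  have hU' : HasDerivAt (Ufun μ c₁ c₂ B) (derivU₁ μ c₁ B x) x :=
    (hasDerivAt_U₁ hx₁).congr_of_eventuallyEq hU
  have hU'' : HasDerivAt (deriv (Ufun μ c₁ c₂ B))
      (-c₁ / (μ ^ 2 * (1 - x) * (1 + x) ^ 2)) x :=
    (hasDerivAt_derivU₁ hμ.ne' hx₁).congr_of_eventuallyEq
      (hU.deriv.trans (deriv_U₁_eventuallyEq hx₁))
  refine ⟨⟨hU'.differentiableAt, hU''.differentiableAt⟩, ?_⟩
  have : 1 - x ≠ 0 := by linarith [hx₁.2]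
  have : 1 + x ≠ 0 := by linarith [hx₁.1]
  rw [hU''.deriv]
  field_simp
  ring
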